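/- arXiv:1708.06479 — 4 statements merged into one kernel-verified Lean document; each statement's English description precedes it below -/
import Mathlib

section
/- Let p ≥ 1 be an integer, let α > 1 be real, and let z ≥ 0 be real. Then ∑_{n=1}^{2^p−1} s_2(n)·((z+n)^{−α} − (z+n+1)^{−α}) = ∑_{l=0}^{p−1} (2^{l+1})^{−α}·[ζ(α, 1/2 + z/2^{l+1}) − ζ(α, 1 + z/2^{l+1}) − ζ(α, 1/2 + (z+2^p)/2^{l+1}) + ζ(α, 1 + (z+2^p)/2^{l+1})]. -/
/-- Number of ones in the binary expansion of `n` (sum of base-2 digits). -/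
def s2 (n : ℕ) : ℕ := (Nat.digits 2 n).sum

/-- Hurwitz zeta function `ζ(α, w) = ∑_{n ≥ 0} (w + n)^(-α)` for real `α > 1`, `w > 0`. -/
noncomputable def hurwitzZetaReal (α w : ℝ) : ℝ := ∑' n : ℕ, (w + n) ^ (-α)

/-!
Write `s₂(n) = ∑_{l < p} ⌊n / 2^l⌋ mod 2` and swap the sums. Weighted by the `l`-th binary digit,
the differences `f n - f (n + 1)` with `f n = (z + n)^(-α)` survive only on the upper halves
`[2^(l+1) k + 2^l, 2^(l+1) (k + 1))` of the blocks of length `2^(l+1)`, where they telescope to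
`f (2^(l+1) k + 2^l) - f (2^(l+1) (k + 1))`. Pulling out the factor `(2^(l+1))^(-α)`, the sum over
`k < K = 2^(p-l-1)` of these terms is a difference of Hurwitz zeta values, since
`ζ(α, w) - ζ(α, w + K) = ∑_{k < K} (w + k)^(-α)`.
-/

open Finset

lemma s2_eq_sum_bits {p n : ℕ} (hn : n < 2 ^ p) : s2 n = ∑ l ∈ range p, n / 2 ^ l % 2 := by
  induction p generalizing n with
  | zero => simp_all [s2]
  | succ p ih =>
    rcases n.eq_zero_or_pos with rfl | hpos
    · simp [s2]
    have hdiv : n / 2 < 2 ^ p := by omega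
    have hs2 : s2 n = n % 2 + s2 (n / 2) := by
      simp [s2, Nat.digits_def' one_lt_two hpos]
    simp only [hs2, ih hdiv, sum_range_succ' (fun l => n / 2 ^ l % 2), pow_succ,
      Nat.div_div_eq_div_mul, mul_comm 2, pow_zero, Nat.div_one]
    ring

lemma div_add_two_mul_mod_two {m r : ℕ} (k : ℕ) (hr : r < m) : (2 * m * k + r) / m % 2 = 0 := by
  rw [show 2 * m * k + r = r + m * (2 * k) by ring, Nat.add_mul_div_left _ _ (by omega),
    Nat.div_eq_of_lt hr]
  omega

lemma div_add_two_mul_add_mod_two {m r : ℕ} (k : ℕ) (hr : r < m) :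
    (2 * m * k + (m + r)) / m % 2 = 1 := by
  rw [show 2 * m * k + (m + r) = r + m * (2 * k + 1) by ring, Nat.add_mul_div_left _ _ (by omega),
    Nat.div_eq_of_lt hr]
  omega

lemma sum_bit_smul_sub_eq {G : Type*} [AddCommGroup G] (f : ℕ → G) (m K : ℕ) :
    ∑ n ∈ range (2 * m * K), (n / m % 2) • (f n - f (n + 1)) =
      ∑ k ∈ range K, (f (2 * m * k + m) - f (2 * m * (k + 1))) := by
  induction K with
  | zero => simp
  | succ K ih =>
    have hlow : ∑ r ∈ range m, ((2 * m * K + r) / m % 2) • (f (2 * m * K + r) -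
        f (2 * m * K + r + 1)) = 0 :=
      sum_eq_zero fun r hr => by rw [div_add_two_mul_mod_two K (mem_range.1 hr), zero_smul]
    have hhigh : ∑ r ∈ range m, ((2 * m * K + (m + r)) / m % 2) • (f (2 * m * K + (m + r)) -
        f (2 * m * K + (m + r) + 1)) = f (2 * m * K + m) - f (2 * m * (K + 1)) := by
      rw [sum_congr rfl fun r hr => by
          rw [div_add_two_mul_add_mod_two K (mem_range.1 hr), one_smul, ← add_assoc,
            add_assoc _ r],
        sum_range_sub' (fun r => f (2 * m * K + m + r)), add_zero, mul_add_one, two_mul m,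
        add_assoc _ m m]
    rw [show 2 * m * (K + 1) = 2 * m * K + (m + m) by ring, sum_range_add, sum_range_add, ih,
      sum_range_succ, hlow, hhigh, zero_add]

lemma summable_add_nat_rpow_neg (w : ℝ) {α : ℝ} (hα : 1 < α) :
    Summable fun n : ℕ => (w + n) ^ (-α) := by
  refine ((Real.summable_one_div_nat_add_rpow w α).2 hα).of_norm_bounded fun n => ?_
  rw [one_div, ← Real.rpow_neg (abs_nonneg _), add_comm (n : ℝ)]
  exact Real.abs_rpow_le_abs_rpow _ _

lemma hurwitzZetaReal_sub_add_nat {α : ℝ} (hα : 1 < α) (w : ℝ) (K : ℕ) :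
    hurwitzZetaReal α w - hurwitzZetaReal α (w + K) = ∑ k ∈ range K, (w + k) ^ (-α) := by
  rw [hurwitzZetaReal, hurwitzZetaReal, ← (summable_add_nat_rpow_neg w hα).sum_add_tsum_nat_add K]
  simp only [Nat.cast_add, add_assoc, add_comm (K : ℝ), add_sub_cancel_right]

lemma rpow_neg_mul_hurwitzZetaReal_sub {α M w : ℝ} (hα : 1 < α) (hM : 0 < M) (hw : 0 ≤ w)
    (K : ℕ) :
    M ^ (-α) * (hurwitzZetaReal α (w / M) - hurwitzZetaReal α ((w + K * M) / M)) =
      ∑ k ∈ range K, (w + k * M) ^ (-α) := by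
  rw [add_div, mul_div_cancel_right₀ _ hM.ne', hurwitzZetaReal_sub_add_nat hα, mul_sum]
  refine sum_congr rfl fun k _ => ?_
  rw [← Real.mul_rpow hM.le (by positivity), mul_add, mul_div_cancel₀ _ hM.ne', mul_comm M]

lemma sum_bit_mul_sub_rpow_neg_eq {α z : ℝ} (hα : 1 < α) (hz : 0 ≤ z) {l p : ℕ} (hl : l < p) :
    ∑ n ∈ range (2 ^ p), ((n / 2 ^ l % 2 : ℕ) : ℝ) * ((z + n) ^ (-α) - (z + n + 1) ^ (-α)) =
      ((2 : ℝ) ^ (l + 1)) ^ (-α) *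
        (hurwitzZetaReal α (1 / 2 + z / 2 ^ (l + 1)) - hurwitzZetaReal α (1 + z / 2 ^ (l + 1))
          - hurwitzZetaReal α (1 / 2 + (z + 2 ^ p) / 2 ^ (l + 1))
          + hurwitzZetaReal α (1 + (z + 2 ^ p) / 2 ^ (l + 1))) := by
  set K := 2 ^ (p - (l + 1))
  have hpow : 2 ^ p = 2 * 2 ^ l * K := by
    rw [← pow_succ', ← pow_add]; congr 1; omega
  have hM : (0 : ℝ) < 2 ^ (l + 1) := by positivity
  have hpowR : (2 : ℝ) ^ p = K * 2 ^ (l + 1) := by exact_mod_cast hpow.trans (by ring)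
  have hhalf (w : ℝ) : 1 / 2 + w / 2 ^ (l + 1) = (w + 2 ^ l) / 2 ^ (l + 1) := by
    field_simp; ring
  have hone (w : ℝ) : 1 + w / 2 ^ (l + 1) = (w + 2 ^ (l + 1)) / 2 ^ (l + 1) := by
    field_simp; ring
  rw [hpowR, hhalf, hone, hhalf, hone, add_right_comm z (K * _ : ℝ), add_right_comm z (K * _ : ℝ),
    show ∀ a b c d : ℝ, a - b - c + d = (a - c) - (b - d) from fun _ _ _ _ => by ring,
    mul_sub, rpow_neg_mul_hurwitzZetaReal_sub hα hM (by positivity),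
    rpow_neg_mul_hurwitzZetaReal_sub hα hM (by positivity), ← sum_sub_distrib, hpow]
  have htel := sum_bit_smul_sub_eq (fun n : ℕ => (z + n) ^ (-α)) (2 ^ l) K
  simp only [nsmul_eq_mul, Nat.cast_add, Nat.cast_mul, Nat.cast_pow, Nat.cast_ofNat,
    Nat.cast_one] at htel
  simp only [add_assoc] at htel ⊢
  rw [htel]
  refine sum_congr rfl fun k _ => ?_
  ring_nf

theorem stmt2_general (p : ℕ) (α z : ℝ) (hα : 1 < α) (hz : 0 ≤ z) :
    ∑ n ∈ Finset.Icc 1 (2 ^ p - 1),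
      (s2 n : ℝ) * ((z + n) ^ (-α) - (z + n + 1) ^ (-α)) =
    ∑ l ∈ Finset.range p, ((2 : ℝ) ^ (l + 1)) ^ (-α) *
      (hurwitzZetaReal α (1 / 2 + z / 2 ^ (l + 1)) - hurwitzZetaReal α (1 + z / 2 ^ (l + 1))
        - hurwitzZetaReal α (1 / 2 + (z + 2 ^ p) / 2 ^ (l + 1))
        + hurwitzZetaReal α (1 + (z + 2 ^ p) / 2 ^ (l + 1))) := by
  have hIcc : Icc 1 (2 ^ p - 1) = Ico 1 (2 ^ p) := by
    ext n; simp only [mem_Icc, mem_Ico]; have := p.one_le_two_pow; omega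
  have hLHS : ∑ n ∈ Ico 1 (2 ^ p), (s2 n : ℝ) * ((z + n) ^ (-α) - (z + n + 1) ^ (-α)) =
      ∑ n ∈ range (2 ^ p), (s2 n : ℝ) * ((z + n) ^ (-α) - (z + n + 1) ^ (-α)) := by
    simp [sum_range_eq_add_Ico _ p.two_pow_pos, s2]
  rw [hIcc, hLHS, sum_congr rfl fun n hn => by
      rw [s2_eq_sum_bits (mem_range.1 hn), Nat.cast_sum, sum_mul], sum_comm]
  exact sum_congr rfl fun l hl => sum_bit_mul_sub_rpow_neg_eq hα hz (mem_range.1 hl)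

theorem stmt2 (p : ℕ) (hp : 1 ≤ p) (α z : ℝ) (hα : 1 < α) (hz : 0 ≤ z) :
    ∑ n ∈ Finset.Icc 1 (2 ^ p - 1),
      (s2 n : ℝ) * ((z + n) ^ (-α) - (z + n + 1) ^ (-α)) =
    ∑ l ∈ Finset.range p, ((2 : ℝ) ^ (l + 1)) ^ (-α) *
      (hurwitzZetaReal α (1 / 2 + z / 2 ^ (l + 1)) - hurwitzZetaReal α (1 + z / 2 ^ (l + 1))
        - hurwitzZetaReal α (1 / 2 + (z + 2 ^ p) / 2 ^ (l + 1))
        + hurwitzZetaReal α (1 + (z + 2 ^ p) / 2 ^ (l + 1))) :=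
  stmt2_general p α z hα hz
end

section
/- Let p ≥ 1 be an integer and let z ≥ 0 be real. Then ∑_{n=1}^{2^p−1} s_2(n)/((z+n)(z+n+1)) = ∑_{l=0}^{p−1} 2^{−(l+1)}·[ψ(z/2^{l+1} + 1) − ψ(z/2^{l+1} + 1/2) − ψ((z+2^p)/2^{l+1} + 1) + ψ((z+2^p)/2^{l+1} + 1/2)]. -/
/-- The digamma function `ψ(x) = Γ'(x)/Γ(x)`. -/
noncomputable def digamma (x : ℝ) : ℝ := deriv Real.Gamma x / Real.Gamma x

open Finset

theorem Real.deriv_Gamma_add_one {s : ℝ} (hs : ∀ m : ℕ, s ≠ -m) :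
    deriv Gamma (s + 1) = Gamma s + s * deriv Gamma s := by
  have hs0 : s ≠ 0 := by simpa using hs 0
  have hmul : HasDerivAt (fun t => t * Gamma t) (Gamma s + s * deriv Gamma s) s := by
    simpa using (hasDerivAt_id' s).fun_mul (differentiableAt_Gamma hs).hasDerivAt
  rw [← deriv_comp_add_const]
  refine (hmul.congr_of_eventuallyEq ?_).deriv
  filter_upwards [eventually_ne_nhds hs0] with t ht using Gamma_add_one ht

theorem digamma_add_one {x : ℝ} (hx : ∀ m : ℕ, x ≠ -m) : digamma (x + 1) = digamma x + x⁻¹ := by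
  have hx0 : x ≠ 0 := by simpa using hx 0
  have hΓ := Real.Gamma_ne_zero hx
  rw [digamma, digamma, Real.deriv_Gamma_add_one hx, Real.Gamma_add_one hx0]
  field_simp
  ring

theorem digamma_add_nat {x : ℝ} (hx : ∀ m : ℕ, x ≠ -m) (n : ℕ) :
    digamma (x + n) = digamma x + ∑ k ∈ range n, (x + k)⁻¹ := by
  induction n with
  | zero => simp
  | succ n ih =>
    have hxn : ∀ m : ℕ, x + n ≠ -m := fun m h => hx (m + n) (by push_cast; linarith)
    rw [Nat.cast_succ, ← add_assoc, digamma_add_one hxn, ih, sum_range_succ, add_assoc]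

theorem digamma_half_shift_sub_add_nat {x : ℝ} (hx : -(1 / 2) < x) (M : ℕ) :
    digamma (x + 1) - digamma (x + 1 / 2) - digamma (x + M + 1) + digamma (x + M + 1 / 2) =
      ∑ k ∈ range M, ((x + 1 / 2 + k)⁻¹ - (x + 1 + k)⁻¹) := by
  have hne : ∀ {y : ℝ}, 0 < y → ∀ m : ℕ, y ≠ -m := fun hy m => by
    have := m.cast_nonneg (α := ℝ)
    linarith
  rw [add_right_comm x (M : ℝ), add_right_comm x (M : ℝ), digamma_add_nat (hne (by linarith)),
    digamma_add_nat (hne (by linarith)), sum_sub_distrib]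
  ring

theorem inv_two_mul_digamma_half_shift {y d : ℝ} (hy : 0 ≤ y) (hd : 0 < d) (M : ℕ) :
    (2 * d)⁻¹ * (digamma (y / (2 * d) + 1) - digamma (y / (2 * d) + 1 / 2)
      - digamma ((y + 2 * d * M) / (2 * d) + 1) + digamma ((y + 2 * d * M) / (2 * d) + 1 / 2)) =
    ∑ k ∈ range M, ((y + 2 * d * k + d)⁻¹ - (y + 2 * d * k + 2 * d)⁻¹) := by
  have hshift : (y + 2 * d * M) / (2 * d) = y / (2 * d) + M := by field_simp
  have hpos : 0 ≤ y / (2 * d) := by positivity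
  rw [hshift, digamma_half_shift_sub_add_nat (by linarith), mul_sum]
  refine sum_congr rfl fun k _ => ?_
  field_simp
  ring

theorem Nat.digits_sum_eq_sum_range_div_pow_mod {b p n : ℕ} (hb : 1 < b) (hn : n < b ^ p) :
    (Nat.digits b n).sum = ∑ l ∈ range p, n / b ^ l % b := by
  induction p generalizing n with
  | zero => simp_all
  | succ p ih =>
    rcases Nat.eq_zero_or_pos n with rfl | hpos
    · simp
    have hdiv : n / b < b ^ p := Nat.div_lt_of_lt_mul (by rwa [← pow_succ'])
    rw [Nat.digits_def' hb hpos, List.sum_cons, ih hdiv, sum_range_succ', pow_zero, Nat.div_one,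
      add_comm]
    simp only [pow_succ', Nat.div_div_eq_div_mul]

theorem sum_range_two_mul_div_mod_two_smul_sub {G : Type*} [AddCommGroup G] (g : ℕ → G)
    (d k : ℕ) :
    ∑ r ∈ range (2 * d), ((2 * d * k + r) / d % 2) • (g (2 * d * k + r) - g (2 * d * k + r + 1)) =
      g (2 * d * k + d) - g (2 * d * k + 2 * d) := by
  have hlow : ∀ r ∈ range d, (2 * d * k + r) / d % 2 = 0 := by
    intro r hr
    rw [show 2 * d * k + r = d * (2 * k) + r by ring, Nat.mul_add_div (by grind),
      Nat.div_eq_of_lt (mem_range.mp hr)]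
    omega
  have hhigh : ∀ r ∈ range d, (2 * d * k + (d + r)) / d % 2 = 1 := by
    intro r hr
    rw [show 2 * d * k + (d + r) = d * (2 * k + 1) + r by ring, Nat.mul_add_div (by grind),
      Nat.div_eq_of_lt (mem_range.mp hr)]
    omega
  rw [show range (2 * d) = range (d + d) by rw [two_mul], sum_range_add,
    sum_congr rfl fun r hr => by rw [hlow r hr, zero_smul], sum_const_zero, zero_add,
    sum_congr rfl fun r hr => by rw [hhigh r hr, one_smul, ← add_assoc, add_assoc _ r 1],
    sum_range_sub' fun i => g (2 * d * k + d + i)]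
  simp [two_mul, add_assoc]

theorem sum_range_div_mod_two_smul_sub {G : Type*} [AddCommGroup G] (g : ℕ → G) (d M : ℕ) :
    ∑ n ∈ range (2 * d * M), (n / d % 2) • (g n - g (n + 1)) =
      ∑ k ∈ range M, (g (2 * d * k + d) - g (2 * d * k + 2 * d)) := by
  induction M with
  | zero => simp
  | succ M ih =>
    rw [mul_add_one, sum_range_add, ih, sum_range_succ,
      ← sum_range_two_mul_div_mod_two_smul_sub g d M]

theorem stmt3_general (p : ℕ) (z : ℝ) (hz : 0 ≤ z) :
    ∑ n ∈ Finset.Icc 1 (2 ^ p - 1),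
      (s2 n : ℝ) / ((z + n) * (z + n + 1)) =
    ∑ l ∈ Finset.range p, ((2 : ℝ) ^ (l + 1))⁻¹ *
      (digamma (z / 2 ^ (l + 1) + 1) - digamma (z / 2 ^ (l + 1) + 1 / 2)
        - digamma ((z + 2 ^ p) / 2 ^ (l + 1) + 1)
        + digamma ((z + 2 ^ p) / 2 ^ (l + 1) + 1 / 2)) := by
  set g : ℕ → ℝ := fun n => (z + n)⁻¹
  have hterm : ∀ n ∈ Icc 1 (2 ^ p - 1),
      (s2 n : ℝ) / ((z + n) * (z + n + 1)) = s2 n • (g n - g (n + 1)) := by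
    intro n hn
    have : (1 : ℝ) ≤ n := by exact_mod_cast (mem_Icc.mp hn).1
    have : 0 < z + n := by linarith
    simp only [g, nsmul_eq_mul, Nat.cast_succ, ← add_assoc]
    field_simp
    ring
  have hzero : ∀ n ∈ range (2 ^ p), n ∉ Icc 1 (2 ^ p - 1) → s2 n • (g n - g (n + 1)) = 0 := by
    intro n _ hn
    obtain rfl : n = 0 := by grind
    simp [s2]
  have hbits : ∀ n ∈ range (2 ^ p),
      s2 n • (g n - g (n + 1)) = ∑ l ∈ range p, (n / 2 ^ l % 2) • (g n - g (n + 1)) := by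
    intro n hn
    rw [s2, Nat.digits_sum_eq_sum_range_div_pow_mod one_lt_two (mem_range.mp hn), sum_smul]
  rw [sum_congr rfl hterm, sum_subset (fun n hn => mem_range.mpr (by grind)) hzero,
    sum_congr rfl hbits, sum_comm]
  refine sum_congr rfl fun l hl => ?_
  have hp : 2 ^ p = 2 * 2 ^ l * 2 ^ (p - l - 1) := by
    rw [← pow_succ', ← pow_add]
    congr 1
    grind
  have hpℝ : (2 : ℝ) ^ p = 2 * 2 ^ l * ((2 ^ (p - l - 1) : ℕ) : ℝ) := by exact_mod_cast hp
  rw [hp, sum_range_div_mod_two_smul_sub, pow_succ', hpℝ,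
    inv_two_mul_digamma_half_shift hz (by positivity)]
  refine sum_congr rfl fun k _ => ?_
  push_cast [g]
  ring_nf

theorem stmt3 (p : ℕ) (hp : 1 ≤ p) (z : ℝ) (hz : 0 ≤ z) :
    ∑ n ∈ Finset.Icc 1 (2 ^ p - 1),
      (s2 n : ℝ) / ((z + n) * (z + n + 1)) =
    ∑ l ∈ Finset.range p, ((2 : ℝ) ^ (l + 1))⁻¹ *
      (digamma (z / 2 ^ (l + 1) + 1) - digamma (z / 2 ^ (l + 1) + 1 / 2)
        - digamma ((z + 2 ^ p) / 2 ^ (l + 1) + 1)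
        + digamma ((z + 2 ^ p) / 2 ^ (l + 1) + 1 / 2)) :=
  stmt3_general p z hz
end

section
/- Let z > −1 be real. Then ∏_{n=1}^{∞} ((1 + z/n)/(1 + z/(n+1)))^{s_2(n)} = (2^{2z}/Γ(z+1)) · ∏_{l=1}^{∞} Γ(z/2^l + 1), where Γ denotes the Gamma function. -/
open Filter Topology Finset Real

lemma s2_zero : s2 0 = 0 := rfl

lemma s2_two_mul_add (m : ℕ) {b : ℕ} (hb : b < 2) : s2 (2 * m + b) = s2 m + b := by
  rcases Nat.eq_zero_or_pos (2 * m + b) with h | h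
  · obtain ⟨rfl, rfl⟩ : m = 0 ∧ b = 0 := by omega
    rfl
  rw [s2, Nat.digits_def' one_lt_two h, s2]
  simp [Nat.add_mul_div_left, Nat.add_mul_mod_self_left, Nat.mod_eq_of_lt hb,
    Nat.div_eq_of_lt hb, add_comm]

lemma s2_le_log_add_one (m : ℕ) : s2 m ≤ Nat.log 2 m + 1 := by
  rcases eq_or_ne m 0 with rfl | hm
  · simp [s2_zero]
  rw [← Nat.length_digits 2 m one_lt_two hm]
  simpa [s2] using List.sum_le_card_nsmul (Nat.digits 2 m) 1
    fun d hd => Nat.le_of_lt_succ (Nat.digits_lt_base one_lt_two hd)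

lemma succ_sq_le_two_pow (k : ℕ) : (k + 1) ^ 2 ≤ 2 ^ (k + 2) := by
  induction k with
  | zero => norm_num
  | succ k ih =>
    rw [pow_succ 2 (k + 2)]
    rcases k with _ | _ | k
    · norm_num
    · norm_num
    · have : (k + 4) ^ 2 ≤ 2 * (k + 3) ^ 2 := by ring_nf; omega
      linarith

lemma sq_s2_le_four_mul (m : ℕ) : s2 m ^ 2 ≤ 4 * m := by
  rcases eq_or_ne m 0 with rfl | hm
  · simp [s2_zero]
  calc s2 m ^ 2 ≤ (Nat.log 2 m + 1) ^ 2 := Nat.pow_le_pow_left (s2_le_log_add_one m) 2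
    _ ≤ 2 ^ (Nat.log 2 m + 2) := succ_sq_le_two_pow _
    _ = 4 * 2 ^ Nat.log 2 m := by ring
    _ ≤ 4 * m := Nat.mul_le_mul_left 4 (Nat.pow_log_le_self 2 hm)

lemma s2_le_two_mul_rpow (m : ℕ) : (s2 m : ℝ) ≤ 2 * (m : ℝ) ^ (1 / 2 : ℝ) := by
  rw [← sqrt_eq_rpow, ← pow_le_pow_iff_left₀ (by positivity) (by positivity) two_ne_zero,
    mul_pow, sq_sqrt (by positivity)]
  exact_mod_cast sq_s2_le_four_mul m

lemma summable_s2_div_sq : Summable fun m : ℕ => (s2 m : ℝ) / m ^ 2 := by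
  refine ((summable_nat_rpow.mpr (by norm_num : (-3 / 2 : ℝ) < -1)).mul_left 2).of_nonneg_of_le
    (fun m => by positivity) fun m => ?_
  rcases eq_or_ne m 0 with rfl | hm
  · simp [s2_zero]
  have hm0 : (0 : ℝ) < m := by positivity
  calc (s2 m : ℝ) / m ^ 2 ≤ 2 * (m : ℝ) ^ (1 / 2 : ℝ) / m ^ (2 : ℝ) := by
        rw [rpow_two]; gcongr; exact s2_le_two_mul_rpow m
    _ = 2 * (m : ℝ) ^ (-3 / 2 : ℝ) := by
        rw [mul_div_assoc, ← rpow_sub hm0]; norm_num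

lemma one_add_div_pos {w x : ℝ} (hw : -1 < w) (hx : 1 ≤ x) : 0 < 1 + w / x := by
  rw [one_add_div (by positivity)]
  exact div_pos (by linarith) (by positivity)

lemma abs_log_sub_log_le {a b c : ℝ} (hc : 0 < c) (ha : c ≤ a) (hb : c ≤ b) :
    |log a - log b| ≤ |a - b| / c := by
  have key {x y : ℝ} (hx : c ≤ x) (hy : c ≤ y) : log x - log y ≤ |x - y| / c := by
    have hy0 : 0 < y := hc.trans_le hy
    calc log x - log y = log (x / y) := (log_div (by linarith) hy0.ne').symm
      _ ≤ x / y - 1 := log_le_sub_one_of_pos (div_pos (by linarith) hy0)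
      _ = (x - y) / y := by field_simp
      _ ≤ |x - y| / y := by gcongr; exact le_abs_self _
      _ ≤ |x - y| / c := by gcongr
  rw [abs_sub_le_iff]
  exact ⟨key ha hb, abs_sub_comm a b ▸ key hb ha⟩

/-- Written as a difference of logarithms rather than as the logarithm of a quotient, so that
`logFactor_two_mul_add_logFactor` holds with no side conditions. -/
noncomputable def logFactor (w x : ℝ) : ℝ := log (1 + w / x) - log (1 + w / (x + 1))

lemma abs_logFactor_le {w x : ℝ} (hx : 0 < x) (hwx : 2 * |w| ≤ x) :
    |logFactor w x| ≤ 2 * |w| / x ^ 2 := by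
  have half_le {y : ℝ} (hy : x ≤ y) : 1 / 2 ≤ 1 + w / y := by
    have : -(1 / 2) ≤ w / y := by
      rw [le_div_iff₀ (hx.trans_le hy)]; linarith [neg_abs_le w]
    linarith
  have hdiff : |(1 + w / x) - (1 + w / (x + 1))| = |w| / (x * (x + 1)) := by
    have hx1 : 0 < x * (x + 1) := by positivity
    rw [show (1 + w / x) - (1 + w / (x + 1)) = w / (x * (x + 1)) by field_simp; ring,
      abs_div, abs_of_pos hx1]
  calc |logFactor w x| ≤ |w| / (x * (x + 1)) / (1 / 2) :=
        hdiff ▸ abs_log_sub_log_le one_half_pos (half_le le_rfl) (half_le (by linarith))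
    _ ≤ 2 * |w| / x ^ 2 := by
        rw [div_div_eq_mul_div, div_one, sq, mul_comm, ← mul_div_assoc]
        gcongr
        linarith

lemma summable_logFactor (w : ℝ) : Summable fun m : ℕ => logFactor w m := by
  refine ((summable_one_div_nat_pow.mpr one_lt_two).mul_left (2 * |w|)).of_norm_bounded_eventually
    ?_
  rw [Nat.cofinite_eq_atTop]
  filter_upwards [eventually_gt_atTop 0,
    tendsto_natCast_atTop_atTop.eventually_ge_atTop (2 * |w|)] with m hm hwm
  simpa [mul_one_div, div_eq_mul_inv] using abs_logFactor_le (by exact_mod_cast hm) hwm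

lemma summable_logFactor_two_mul_add_one (w : ℝ) :
    Summable fun k : ℕ => logFactor w (2 * k + 1) := by
  have hinj : Function.Injective fun k : ℕ => 2 * k + 1 := fun a b h => by simpa using h
  simpa [Function.comp_def] using (summable_logFactor w).comp_injective hinj

lemma abs_s2_mul_logFactor_le {w : ℝ} {m : ℕ} (hwm : 2 * |w| ≤ m) :
    |s2 m * logFactor w m| ≤ 2 * |w| * (s2 m / m ^ 2) := by
  rcases Nat.eq_zero_or_pos m with rfl | hm
  · simp [s2_zero]
  rw [abs_mul, Nat.abs_cast, mul_div_assoc', mul_comm (2 * |w|), mul_div_assoc]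
  exact mul_le_mul_of_nonneg_left (abs_logFactor_le (by exact_mod_cast hm) hwm) (by positivity)

lemma summable_s2_mul_logFactor (w : ℝ) : Summable fun m : ℕ => s2 m * logFactor w m := by
  refine (summable_s2_div_sq.mul_left (2 * |w|)).of_norm_bounded_eventually ?_
  rw [Nat.cofinite_eq_atTop]
  filter_upwards [tendsto_natCast_atTop_atTop.eventually_ge_atTop (2 * |w|)] with m hwm
    using abs_s2_mul_logFactor_le hwm

/-- The logarithm of the left-hand product, reindexed from `m = 0`: the junk term `logFactor w 0`
is killed by `s2 0 = 0`. -/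
noncomputable def s2LogSum (w : ℝ) : ℝ := ∑' m : ℕ, s2 m * logFactor w m

lemma abs_s2LogSum_le {w : ℝ} (hw : 2 * |w| ≤ 1) :
    |s2LogSum w| ≤ 2 * |w| * ∑' m : ℕ, (s2 m : ℝ) / m ^ 2 := by
  have hbound (m : ℕ) : |s2 m * logFactor w m| ≤ 2 * |w| * (s2 m / m ^ 2) := by
    rcases Nat.eq_zero_or_pos m with rfl | hm
    · simp [s2_zero]
    exact abs_s2_mul_logFactor_le (hw.trans (by exact_mod_cast hm))
  calc |s2LogSum w| ≤ ∑' m : ℕ, |s2 m * logFactor w m| :=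
        norm_tsum_le_tsum_norm (summable_s2_mul_logFactor w).norm
    _ ≤ ∑' m : ℕ, 2 * |w| * (s2 m / m ^ 2) :=
        (summable_s2_mul_logFactor w).norm.tsum_le_tsum hbound (summable_s2_div_sq.mul_left _)
    _ = 2 * |w| * ∑' m : ℕ, (s2 m : ℝ) / m ^ 2 := tsum_mul_left

lemma tendsto_s2LogSum_zero : Tendsto s2LogSum (𝓝 0) (𝓝 0) := by
  have hlin : Tendsto (fun w : ℝ => 2 * |w|) (𝓝 0) (𝓝 0) := by
    simpa using (continuous_abs.const_mul 2).tendsto (0 : ℝ)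
  refine squeeze_zero_norm' ?_ (by simpa using hlin.mul_const (∑' m : ℕ, (s2 m : ℝ) / m ^ 2))
  filter_upwards [hlin.eventually_le_const one_pos] with w hw using abs_s2LogSum_le hw

lemma logFactor_two_mul_add_logFactor (w x : ℝ) :
    logFactor w (2 * x) + logFactor w (2 * x + 1) = logFactor (w / 2) x := by
  rw [logFactor, logFactor, logFactor, div_div, div_div, mul_add_one, add_assoc,
    one_add_one_eq_two]
  ring

lemma s2_mul_logFactor_even_add_odd (w : ℝ) (k : ℕ) :
    s2 (2 * k) * logFactor w ↑(2 * k) + s2 (2 * k + 1) * logFactor w ↑(2 * k + 1) =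
      s2 k * logFactor (w / 2) k + logFactor w (2 * k + 1) := by
  have heven : s2 (2 * k) = s2 k := s2_two_mul_add k (b := 0) two_pos
  rw [← logFactor_two_mul_add_logFactor, heven, s2_two_mul_add k one_lt_two]
  push_cast
  ring

lemma s2LogSum_eq_half_add (w : ℝ) :
    s2LogSum w = s2LogSum (w / 2) + ∑' k : ℕ, logFactor w (2 * k + 1) := by
  set f : ℕ → ℝ := fun m => s2 m * logFactor w m with hf
  have heven : Summable fun k => f (2 * k) :=
    (summable_s2_mul_logFactor w).comp_injective (mul_right_injective₀ two_ne_zero)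
  have hodd : Summable fun k => f (2 * k + 1) :=
    (summable_s2_mul_logFactor w).comp_injective fun a b h => by simpa using h
  have hpair : HasSum (fun k => f (2 * k) + f (2 * k + 1))
      (s2LogSum (w / 2) + ∑' k : ℕ, logFactor w (2 * k + 1)) := by
    simp only [hf, s2_mul_logFactor_even_add_odd]
    exact (summable_s2_mul_logFactor (w / 2)).hasSum.add
      (summable_logFactor_two_mul_add_one w).hasSum
  exact (heven.hasSum.even_add_odd hodd.hasSum).tsum_eq.trans
    ((heven.hasSum.add hodd.hasSum).unique hpair)

lemma GammaSeq_mul_div_GammaSeq_mul {a b c d : ℝ} (h : a + b = c + d) {n : ℕ} (hn : n ≠ 0) :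
    GammaSeq c n * GammaSeq d n / (GammaSeq a n * GammaSeq b n) =
      ∏ k ∈ range (n + 1), (a + k) * (b + k) / ((c + k) * (d + k)) := by
  have hn0 : (0 : ℝ) < n := by positivity
  have hpow : (n : ℝ) ^ c * (n : ℝ) ^ d = (n : ℝ) ^ a * (n : ℝ) ^ b := by
    rw [← rpow_add hn0, ← rpow_add hn0, h]
  have hpos : (n : ℝ) ^ a * (n : ℝ) ^ b * (n.factorial : ℝ) ^ 2 ≠ 0 := by positivity
  simp only [GammaSeq, prod_div_distrib, prod_mul_distrib]
  calc _ = (n : ℝ) ^ c * (n : ℝ) ^ d * (n.factorial : ℝ) ^ 2 /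
        ((n : ℝ) ^ a * (n : ℝ) ^ b * (n.factorial : ℝ) ^ 2) *
        ((∏ k ∈ range (n + 1), (a + k)) * (∏ k ∈ range (n + 1), (b + k)) /
          ((∏ k ∈ range (n + 1), (c + k)) * ∏ k ∈ range (n + 1), (d + k))) := by
          simp only [div_eq_mul_inv, mul_inv, inv_inv]; ring
    _ = _ := by rw [hpow, div_self hpos, one_mul]

lemma tendsto_prod_ratio_Gamma {a b c d : ℝ} (ha : 0 < a) (hb : 0 < b) (h : a + b = c + d) :
    Tendsto (fun n => ∏ k ∈ range n, (a + k) * (b + k) / ((c + k) * (d + k))) atTop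
      (𝓝 (Gamma c * Gamma d / (Gamma a * Gamma b))) := by
  have hlim := ((GammaSeq_tendsto_Gamma c).mul (GammaSeq_tendsto_Gamma d)).div
    ((GammaSeq_tendsto_Gamma a).mul (GammaSeq_tendsto_Gamma b))
    (mul_pos (Gamma_pos_of_pos ha) (Gamma_pos_of_pos hb)).ne'
  rw [← tendsto_add_atTop_iff_nat 1]
  refine hlim.congr' ?_
  filter_upwards [eventually_ne_atTop 0] with n hn using GammaSeq_mul_div_GammaSeq_mul h hn

lemma logFactor_two_mul_add_one {w : ℝ} (hw : -1 < w) (k : ℕ) :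
    logFactor w (2 * k + 1) =
      log (((w + 1) / 2 + k) * (1 + k) / ((1 / 2 + k) * (w / 2 + 1 + k))) := by
  have hk : (0 : ℝ) ≤ k := k.cast_nonneg
  have hpos : 0 < 1 + w / (2 * k + 1 + 1) := one_add_div_pos hw (by linarith)
  rw [logFactor, ← log_div (one_add_div_pos hw (by linarith)).ne' hpos.ne']
  congr 1
  have hd : 0 < (1 / 2 + k) * (w / 2 + 1 + k) := mul_pos (by positivity) (by linarith)
  rw [div_eq_div_iff hpos.ne' hd.ne']
  field_simp
  ring

lemma Gamma_one_half_mul_Gamma_div {w : ℝ} (hw : -1 < w) :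
    Gamma (1 / 2) * Gamma (w / 2 + 1) / (Gamma ((w + 1) / 2) * Gamma 1) =
      2 ^ w * Gamma (w / 2 + 1) ^ 2 / Gamma (w + 1) := by
  have hdup := Gamma_mul_Gamma_add_half ((w + 1) / 2)
  rw [show (w + 1) / 2 + 1 / 2 = w / 2 + 1 by ring, show 2 * ((w + 1) / 2) = w + 1 by ring,
    show 1 - (w + 1) = -w by ring, rpow_neg zero_le_two] at hdup
  have hinv : (2 : ℝ) ^ w * ((2 : ℝ) ^ w)⁻¹ = 1 := mul_inv_cancel₀ (by positivity)
  have hG : 0 < Gamma ((w + 1) / 2) := Gamma_pos_of_pos (by linarith)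
  rw [Gamma_one_half_eq, Gamma_one, mul_one,
    div_eq_div_iff hG.ne' (Gamma_pos_of_pos (by linarith)).ne']
  linear_combination (-(2 ^ w * Gamma (w / 2 + 1))) * hdup -
    (√π * Gamma (w / 2 + 1) * Gamma (w + 1)) * hinv

lemma hasSum_logFactor_two_mul_add_one {w : ℝ} (hw : -1 < w) :
    HasSum (fun k : ℕ => logFactor w (2 * k + 1))
      (w * log 2 + 2 * log (Gamma (w / 2 + 1)) - log (Gamma (w + 1))) := by
  have hG : 0 < Gamma (w / 2 + 1) := Gamma_pos_of_pos (by linarith)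
  have hG' : 0 < Gamma (w + 1) := Gamma_pos_of_pos (by linarith)
  have hratio_pos (k : ℕ) :
      0 < ((w + 1) / 2 + k) * (1 + k) / ((1 / 2 + k) * (w / 2 + 1 + k)) := by
    have hk : (0 : ℝ) ≤ k := k.cast_nonneg
    exact div_pos (mul_pos (by linarith) (by linarith)) (mul_pos (by linarith) (by linarith))
  have hpartial (n : ℕ) : ∑ k ∈ range n, logFactor w (2 * k + 1) =
      log (∏ k ∈ range n, ((w + 1) / 2 + k) * (1 + k) / ((1 / 2 + k) * (w / 2 + 1 + k))) := by
    rw [log_prod fun k _ => (hratio_pos k).ne']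
    exact sum_congr rfl fun k _ => logFactor_two_mul_add_one hw k
  have hlim := tendsto_prod_ratio_Gamma (by linarith : 0 < (w + 1) / 2) one_pos
    (show (w + 1) / 2 + 1 = 1 / 2 + (w / 2 + 1) by ring)
  rw [Gamma_one_half_mul_Gamma_div hw] at hlim
  have hlog := hlim.log (by positivity)
  rw [log_div (by positivity) hG'.ne', log_mul (by positivity) (by positivity), log_rpow two_pos,
    log_pow, ← funext hpartial] at hlog
  push_cast at hlog
  have hsum := summable_logFactor_two_mul_add_one w
  exact tendsto_nhds_unique hsum.hasSum.tendsto_sum_nat hlog ▸ hsum.hasSum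

lemma neg_one_lt_div_two_pow {z : ℝ} (hz : -1 < z) (K : ℕ) : -1 < z / 2 ^ K := by
  rw [lt_div_iff₀ (by positivity)]
  linarith [one_le_pow₀ (one_le_two : (1 : ℝ) ≤ 2) (n := K)]

lemma tendsto_div_two_pow (z : ℝ) : Tendsto (fun K : ℕ => z / 2 ^ K) atTop (𝓝 0) :=
  tendsto_const_nhds.div_atTop (tendsto_pow_atTop_atTop_of_one_lt one_lt_two)

lemma log_Gamma_add_one_isBigO : (fun x : ℝ => log (Gamma (x + 1))) =O[𝓝 0] fun x => x := by
  have hdiff : DifferentiableAt ℝ (fun x : ℝ => log (Gamma (x + 1))) 0 := by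
    refine ((differentiableAt_Gamma fun m h => ?_).comp 0 (differentiableAt_id.add_const 1)).log ?_
    · linarith [m.cast_nonneg (α := ℝ), show (0 : ℝ) + 1 = -m from h]
    · simp
  simpa using hdiff.isBigO_sub

lemma hasSum_log_Gamma_div_two_pow {z : ℝ} (hz : -1 < z) :
    HasSum (fun l : ℕ => log (Gamma (z / 2 ^ (l + 1) + 1)))
      (s2LogSum z - 2 * z * log 2 + log (Gamma (z + 1))) := by
  set H : ℝ → ℝ := fun w => s2LogSum w - 2 * w * log 2 + log (Gamma (w + 1)) with hH
  have hstep {w : ℝ} (hw : -1 < w) : H w = H (w / 2) + log (Gamma (w / 2 + 1)) := by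
    simp only [hH]
    rw [s2LogSum_eq_half_add w, (hasSum_logFactor_two_mul_add_one hw).tsum_eq]
    ring
  have hpartial (K : ℕ) :
      ∑ l ∈ range K, log (Gamma (z / 2 ^ (l + 1) + 1)) = H z - H (z / 2 ^ K) := by
    induction K with
    | zero => simp
    | succ K ih =>
      rw [sum_range_succ, ih, hstep (neg_one_lt_div_two_pow hz K), div_div, ← pow_succ]
      ring
  have hH0 : Tendsto H (𝓝 0) (𝓝 0) := by
    have hlin : Tendsto (fun w : ℝ => 2 * w * log 2) (𝓝 0) (𝓝 0) := by
      have : Continuous fun w : ℝ => 2 * w * log 2 := by fun_prop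
      simpa using this.tendsto 0
    simpa using (tendsto_s2LogSum_zero.sub hlin).add
      (log_Gamma_add_one_isBigO.trans_tendsto tendsto_id)
  have hsum : Summable fun l : ℕ => log (Gamma (z / 2 ^ (l + 1) + 1)) := by
    have hgeo : Summable fun l : ℕ => z / 2 ^ (l + 1) := by
      simpa [div_div, ← pow_succ'] using summable_geometric_two' z
    exact summable_of_isBigO_nat hgeo (log_Gamma_add_one_isBigO.comp_tendsto
      ((tendsto_div_two_pow z).comp (tendsto_add_atTop_nat 1)))
  have hlim : Tendsto (fun K => ∑ l ∈ range K, log (Gamma (z / 2 ^ (l + 1) + 1))) atTop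
      (𝓝 (H z)) := by
    simpa [hpartial] using tendsto_const_nhds.sub (hH0.comp (tendsto_div_two_pow z))
  exact hsum.hasSum_iff.mpr (tendsto_nhds_unique hsum.hasSum.tendsto_sum_nat hlim)

lemma hasProd_pow_s2 {z : ℝ} (hz : -1 < z) :
    HasProd (fun n : ℕ => ((1 + z / (n + 1)) / (1 + z / (n + 2))) ^ s2 (n + 1))
      (exp (s2LogSum z)) := by
  have hpos (n : ℕ) (k : ℝ) (hk : 1 ≤ k) : 0 < 1 + z / (n + k) :=
    one_add_div_pos hz (by linarith [n.cast_nonneg (α := ℝ)])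
  have hterm (n : ℕ) : log (((1 + z / (n + 1)) / (1 + z / (n + 2))) ^ s2 (n + 1)) =
      s2 (n + 1) * logFactor z ↑(n + 1) := by
    rw [log_pow, log_div (hpos n 1 le_rfl).ne' (hpos n 2 one_le_two).ne', logFactor]
    push_cast
    ring_nf
  refine hasProd_of_hasSum_log
    (fun n => pow_pos (div_pos (hpos n 1 le_rfl) (hpos n 2 one_le_two)) _) ?_
  have hshift := (hasSum_nat_add_iff' 1).mpr (summable_s2_mul_logFactor z).hasSum
  simp only [sum_range_one, s2_zero, Nat.cast_zero, zero_mul, sub_zero] at hshift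
  simp only [hterm]
  exact hshift

theorem stmt10 (z : ℝ) (hz : -1 < z) :
    ∏' n : ℕ, ((1 + z / (n + 1)) / (1 + z / (n + 2))) ^ s2 (n + 1) =
    ((2 : ℝ) ^ (2 * z) / Real.Gamma (z + 1)) *
      ∏' l : ℕ, Real.Gamma (z / 2 ^ (l + 1) + 1) := by
  have hGamma : 0 < Gamma (z + 1) := Gamma_pos_of_pos (by linarith)
  have hrhs := hasProd_of_hasSum_log
    (fun l => Gamma_pos_of_pos (by linarith [neg_one_lt_div_two_pow hz (l + 1)]))
    (hasSum_log_Gamma_div_two_pow hz)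
  rw [(hasProd_pow_s2 hz).tprod_eq, hrhs.tprod_eq, rpow_def_of_pos two_pos, exp_add, exp_sub,
    exp_log hGamma]
  field_simp
end

section
/- Let b ≥ 2 and p ≥ 1 be integers, let α > 2 be real, and let z ≥ 0 be real. Then ∑_{n=1}^{b^p−1} s_b(n)·(n+z)^{−α} = ∑_{l=0}^{p−1} [ζ₂(α, z+b^l, (1, b^l)) − ζ₂(α, z+b^l+b^p, (1, b^l))] − b·∑_{l=1}^{p} [ζ₂(α, z+b^l, (1, b^l)) − ζ₂(α, z+b^l+b^p, (1, b^l))], where ζ₂(α, x, (a₁, a₂)) = ∑_{m₁ ≥ 0} ∑_{m₂ ≥ 0} (x + a₁m₁ + a₂m₂)^{−α} is the Barnes double zeta function (the double series converges for α > 2, x > 0 and a₁, a₂ > 0). -/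
/-- Sum of digits of `n` in base `b`. -/
def digitSum (b n : ℕ) : ℕ := (Nat.digits b n).sum

/-- Barnes double zeta function
`ζ₂(α, x, (a₁, a₂)) = ∑_{m₁ ≥ 0} ∑_{m₂ ≥ 0} (x + a₁m₁ + a₂m₂)^(-α)`. -/
noncomputable def barnesZeta2 (α x a₁ a₂ : ℝ) : ℝ :=
  ∑' m : ℕ × ℕ, (x + a₁ * m.1 + a₂ * m.2) ^ (-α)

/-!
Counting the pairs `(m₁, m₂)` with `m₁ + c (m₂ + 1) = n` gives
`ζ₂(α, x + c, (1, c)) = ∑ₙ ⌊n / c⌋ (n + x)^(-α)`. For `c ∣ B`, subtracting the same series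
shifted by `B` leaves `∑_{n < B} ⌊n / c⌋ (n + x)^(-α)` plus `B / c` times a tail independent
of `c`. With `B = bᵖ` and `D(c)` that difference, the tails cancel in `D(bˡ) - b D(bˡ⁺¹)`,
and `⌊n / bˡ⌋ - b ⌊n / bˡ⁺¹⌋` is the `l`-th digit of `n`, so summing over `l < p` produces
`s_b(n)`.
-/

open Finset

lemma digitSum_eq_sum_range_div_pow_mod {b : ℕ} (hb : 2 ≤ b) :
    ∀ {p n : ℕ}, n < b ^ p → digitSum b n = ∑ l ∈ range p, n / b ^ l % b
  | 0, n, hn => by simp [show n = 0 by simpa using hn, digitSum]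
  | p + 1, n, hn => by
    have hb0 : 0 < b := by omega
    have hdiv : n / b < b ^ p := by rwa [Nat.div_lt_iff_lt_mul hb0, ← pow_succ]
    rcases Nat.eq_zero_or_pos n with rfl | hn0
    · simp [digitSum]
    rw [digitSum, Nat.digits_def' hb hn0, List.sum_cons, ← digitSum,
      digitSum_eq_sum_range_div_pow_mod hb hdiv, sum_range_succ']
    simp only [pow_succ', ← Nat.div_div_eq_div_mul, pow_zero, Nat.div_one]
    ring

lemma sum_Icc_digitSum_mul {R : Type*} [CommSemiring R] {b : ℕ} (hb : 2 ≤ b) (p : ℕ)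
    (g : ℕ → R) :
    ∑ n ∈ Icc 1 (b ^ p - 1), (digitSum b n : R) * g n =
      ∑ l ∈ range p, ∑ n ∈ range (b ^ p), ((n / b ^ l % b : ℕ) : R) * g n := by
  calc ∑ n ∈ Icc 1 (b ^ p - 1), (digitSum b n : R) * g n
      = ∑ n ∈ range (b ^ p), (digitSum b n : R) * g n :=
        sum_subset (fun n hn => by simp at hn ⊢; omega) fun n hn hn' => by
          obtain rfl : n = 0 := by simp at hn hn'; omega
          simp [digitSum]
    _ = ∑ n ∈ range (b ^ p), ∑ l ∈ range p, ((n / b ^ l % b : ℕ) : R) * g n :=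
        sum_congr rfl fun n hn => by
          rw [digitSum_eq_sum_range_div_pow_mod hb (mem_range.1 hn), Nat.cast_sum, sum_mul]
    _ = _ := sum_comm

section Summability

variable {α x : ℝ}

lemma summable_add_rpow_neg (hα : 1 < α) (hx : 0 ≤ x) :
    Summable fun n : ℕ => ((n : ℝ) + x) ^ (-α) := by
  refine ((Real.summable_one_div_nat_add_rpow x α).2 hα).congr fun n => ?_
  rw [abs_of_nonneg (by positivity), one_div, Real.rpow_neg (by positivity)]

lemma summable_natCast_mul_add_rpow_neg (hα : 2 < α) (hx : 0 ≤ x) :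
    Summable fun n : ℕ => (n : ℝ) * ((n : ℝ) + x) ^ (-α) := by
  refine (Real.summable_nat_rpow.2 (by linarith : 1 - α < -1)).of_nonneg_of_le
    (fun n => by positivity) fun n => ?_
  rcases Nat.eq_zero_or_pos n with rfl | hn
  · simpa using Real.rpow_nonneg le_rfl _
  have hn0 : (0 : ℝ) < n := by exact_mod_cast hn
  calc (n : ℝ) * ((n : ℝ) + x) ^ (-α) ≤ n * (n : ℝ) ^ (-α) :=
        mul_le_mul_of_nonneg_left
          (Real.rpow_le_rpow_of_nonpos hn0 (by linarith) (by linarith)) hn0.le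
    _ = (n : ℝ) ^ (1 - α) := by rw [sub_eq_add_neg, Real.rpow_add hn0, Real.rpow_one]

lemma summable_div_mul_add_rpow_neg (hα : 2 < α) (hx : 0 ≤ x) (c : ℕ) :
    Summable fun n : ℕ => ((n / c : ℕ) : ℝ) * ((n : ℝ) + x) ^ (-α) :=
  (summable_natCast_mul_add_rpow_neg hα hx).of_nonneg_of_le (fun n => by positivity)
    fun n => by gcongr; exact_mod_cast Nat.div_le_self n c

end Summability

def prodEquivSigmaFinDiv (c : ℕ) (hc : 0 < c) : ℕ × ℕ ≃ Σ n : ℕ, Fin (n / c) where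
  toFun m := ⟨m.1 + c * (m.2 + 1), m.2, by
    rw [← Nat.add_one_le_iff, Nat.le_div_iff_mul_le hc, mul_comm]
    exact Nat.le_add_left _ _⟩
  invFun x := (x.1 - c * (x.2.1 + 1), x.2.1)
  left_inv m := by simp
  right_inv := by
    rintro ⟨n, k, hk⟩
    have hk : c * (k + 1) ≤ n := by
      rw [mul_comm]
      exact (Nat.le_div_iff_mul_le hc).1 hk
    obtain ⟨m, rfl⟩ : ∃ m, m + c * (k + 1) = n := ⟨n - c * (k + 1), Nat.sub_add_cancel hk⟩
    refine Sigma.ext (by simp) ?_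
    refine (Fin.heq_ext_iff ?_).2 rfl
    simp

section BarnesZeta2

variable {α x : ℝ}

lemma barnesZeta2_add_self_eq_tsum (hα : 2 < α) (hx : 0 ≤ x) {c : ℕ} (hc : 0 < c) :
    barnesZeta2 α (x + c) 1 c = ∑' n : ℕ, ((n / c : ℕ) : ℝ) * ((n : ℝ) + x) ^ (-α) := by
  set f : ℕ → ℝ := fun n => ((n : ℝ) + x) ^ (-α)
  have hfiber : ∀ n : ℕ, ∑' _ : Fin (n / c), f n = ((n / c : ℕ) : ℝ) * f n := fun n => by
    simp [tsum_fintype]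
  have hsum : Summable fun y : Σ n : ℕ, Fin (n / c) => f y.1 := by
    refine (summable_sigma_of_nonneg fun y => by positivity).2
      ⟨fun n => Summable.of_finite, ?_⟩
    simpa only [hfiber] using summable_div_mul_add_rpow_neg hα hx c
  calc barnesZeta2 α (x + c) 1 c = ∑' m : ℕ × ℕ, f (prodEquivSigmaFinDiv c hc m).1 := by
        refine tsum_congr fun m => ?_
        simp only [f, prodEquivSigmaFinDiv, Equiv.coe_fn_mk]
        push_cast
        ring_nf
    _ = ∑' n : ℕ, ∑' _ : Fin (n / c), f n :=
        ((prodEquivSigmaFinDiv c hc).tsum_eq fun y => f y.1).trans hsum.tsum_sigma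
    _ = _ := tsum_congr hfiber

lemma barnesZeta2_sub_barnesZeta2_add (hα : 2 < α) (hx : 0 ≤ x) {c B : ℕ} (hc : 0 < c)
    (hcB : c ∣ B) :
    barnesZeta2 α (x + c) 1 c - barnesZeta2 α (x + c + B) 1 c =
      ∑ n ∈ range B, ((n / c : ℕ) : ℝ) * ((n : ℝ) + x) ^ (-α) +
        ((B / c : ℕ) : ℝ) * ∑' n : ℕ, ((n : ℝ) + (x + B)) ^ (-α) := by
  have hxB : 0 ≤ x + B := by positivity
  have hshift : ∀ n : ℕ, (((n + B) / c : ℕ) : ℝ) * (((n + B : ℕ) : ℝ) + x) ^ (-α) =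
      ((n / c : ℕ) : ℝ) * ((n : ℝ) + (x + B)) ^ (-α) +
        ((B / c : ℕ) : ℝ) * ((n : ℝ) + (x + B)) ^ (-α) := fun n => by
    rw [Nat.add_div_of_dvd_left hcB]
    push_cast
    ring_nf
  rw [add_right_comm, barnesZeta2_add_self_eq_tsum hα hx hc,
    barnesZeta2_add_self_eq_tsum hα hxB hc,
    ← (summable_div_mul_add_rpow_neg hα hx c).sum_add_tsum_nat_add B, tsum_congr hshift,
    (summable_div_mul_add_rpow_neg hα hxB c).tsum_add
      ((summable_add_rpow_neg (by linarith) hxB).mul_left _), tsum_mul_left]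
  ring

lemma barnesZeta2_sub_sub_mul_eq_sum_div_mod (hα : 2 < α) (hx : 0 ≤ x) {b c B : ℕ} (hb : 0 < b)
    (hc : 0 < c) (hB : c * b ∣ B) :
    (barnesZeta2 α (x + c) 1 c - barnesZeta2 α (x + c + B) 1 c) -
        b * (barnesZeta2 α (x + c * b) 1 (c * b) - barnesZeta2 α (x + c * b + B) 1 (c * b)) =
      ∑ n ∈ range B, ((n / c % b : ℕ) : ℝ) * ((n : ℝ) + x) ^ (-α) := by
  have h₁ := barnesZeta2_sub_barnesZeta2_add hα hx hc (dvd_of_mul_right_dvd hB)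
  have h₂ := barnesZeta2_sub_barnesZeta2_add hα hx (mul_pos hc hb) hB
  have hquot : B / c = b * (B / (c * b)) := by
    obtain ⟨k, rfl⟩ := hB
    rw [Nat.mul_div_cancel_left _ (mul_pos hc hb), mul_assoc, Nat.mul_div_cancel_left _ hc]
  have hdigits : ∀ n : ℕ,
      ((n / c : ℕ) : ℝ) = ((n / c % b : ℕ) : ℝ) + b * ((n / (c * b) : ℕ) : ℝ) := fun n => by
    rw [← Nat.div_div_eq_div_mul]
    exact_mod_cast (Nat.mod_add_div _ _).symm
  have hfinite : ∑ n ∈ range B, ((n / c : ℕ) : ℝ) * ((n : ℝ) + x) ^ (-α) -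
      b * ∑ n ∈ range B, ((n / (c * b) : ℕ) : ℝ) * ((n : ℝ) + x) ^ (-α) =
      ∑ n ∈ range B, ((n / c % b : ℕ) : ℝ) * ((n : ℝ) + x) ^ (-α) := by
    rw [mul_sum, ← sum_sub_distrib]
    exact sum_congr rfl fun n _ => by rw [hdigits]; ring
  push_cast at h₂
  rw [h₁, h₂, hquot, Nat.cast_mul]
  linear_combination hfinite

end BarnesZeta2

theorem stmt19_general (b p : ℕ) (hb : 2 ≤ b) (α z : ℝ) (hα : 2 < α) (hz : 0 ≤ z) :
    ∑ n ∈ Finset.Icc 1 (b ^ p - 1), (digitSum b n : ℝ) * ((n : ℝ) + z) ^ (-α) =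
    (∑ l ∈ Finset.range p,
      (barnesZeta2 α (z + b ^ l) 1 (b ^ l) - barnesZeta2 α (z + b ^ l + b ^ p) 1 (b ^ l))) -
    (b : ℝ) * ∑ l ∈ Finset.Icc 1 p,
      (barnesZeta2 α (z + b ^ l) 1 (b ^ l) - barnesZeta2 α (z + b ^ l + b ^ p) 1 (b ^ l)) := by
  have hb0 : 0 < b := by omega
  set D : ℝ → ℝ := fun c => barnesZeta2 α (z + c) 1 c - barnesZeta2 α (z + c + b ^ p) 1 c
  have hstep : ∀ l ∈ range p, D (b ^ l) - b * D (b ^ (l + 1)) =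
      ∑ n ∈ range (b ^ p), ((n / b ^ l % b : ℕ) : ℝ) * ((n : ℝ) + z) ^ (-α) := fun l hl => by
    have hdvd : b ^ l * b ∣ b ^ p := by rw [← pow_succ]; exact pow_dvd_pow b (mem_range.1 hl)
    have h := barnesZeta2_sub_sub_mul_eq_sum_div_mod hα hz hb0 (pow_pos hb0 l) hdvd
    push_cast [← pow_succ] at h
    exact h
  rw [sum_Icc_digitSum_mul hb, ← sum_congr rfl hstep, sum_sub_distrib, ← mul_sum,
    ← Ico_add_one_right_eq_Icc, sum_Ico_eq_sum_range]
  simp only [Nat.add_sub_cancel, add_comm 1]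
  rfl

theorem stmt19 (b p : ℕ) (hb : 2 ≤ b) (hp : 1 ≤ p) (α z : ℝ) (hα : 2 < α) (hz : 0 ≤ z) :
    ∑ n ∈ Finset.Icc 1 (b ^ p - 1), (digitSum b n : ℝ) * ((n : ℝ) + z) ^ (-α) =
    (∑ l ∈ Finset.range p,
      (barnesZeta2 α (z + b ^ l) 1 (b ^ l) - barnesZeta2 α (z + b ^ l + b ^ p) 1 (b ^ l))) -
    (b : ℝ) * ∑ l ∈ Finset.Icc 1 p,
      (barnesZeta2 α (z + b ^ l) 1 (b ^ l) - barnesZeta2 α (z + b ^ l + b ^ p) 1 (b ^ l)) :=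
  stmt19_general b p hb α z hα hz
end
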